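/- Let p, q be positive reals and n ≥ 2, with A as above. The matrix A_i obtained from A by replacing the i-th column with the standard basis vector e_i satisfies det(A_i) = q^{n-1}. -/

import Mathlib

/-- The matrix `A` with `q` on the diagonal, `-p` on the subdiagonal,
`p` in the top-right corner (entry `(1,n)`), and `0` elsewhere. -/
def tilingMatrix (p q : ℝ) (n : ℕ) : Matrix (Fin n) (Fin n) ℝ :=
  Matrix.of fun i j =>
    if (i : ℕ) = (j : ℕ) then q
    else if (i : ℕ) = (j : ℕ) + 1 then -p
    else if (i : ℕ) = 0 ∧ (j : ℕ) = n - 1 then p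
    else 0

private lemma valAdd' (m : ℕ) (i x : Fin (m + 2)) :
    (x.val + i.val + 1 < m + 2 ∧ ((x + (i + 1) : Fin (m + 2)) : ℕ) = x.val + i.val + 1) ∨
      (m + 2 ≤ x.val + i.val + 1 ∧
        ((x + (i + 1) : Fin (m + 2)) : ℕ) = x.val + i.val + 1 - (m + 2)) := by
  have hv : ((x + (i + 1) : Fin (m + 2)) : ℕ) = (x.val + i.val + 1) % (m + 2) := by
    simp only [Fin.add_def, Fin.val_one, Fin.val_mk, Nat.add_mod_mod, ← Nat.add_assoc]
  rcases Nat.lt_or_ge (x.val + i.val + 1) (m + 2) with h | h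
  · exact Or.inl ⟨h, by rw [hv, Nat.mod_eq_of_lt h]⟩
  · refine Or.inr ⟨h, ?_⟩
    have hx := x.isLt; have hi := i.isLt
    rw [hv, Nat.mod_eq_sub_mod h, Nat.mod_eq_of_lt (by omega)]

private lemma diag_entry (p q : ℝ) (m : ℕ) (i c : Fin (m + 2)) :
    ((tilingMatrix p q (m + 2)).updateCol i (Pi.single i 1)).submatrix
      (Equiv.addRight (i + 1)) (Equiv.addRight (i + 1)) c c
      = if (c : ℕ) = m + 1 then 1 else q := by
  have hc := c.isLt; have hi := i.isLt
  rcases valAdd' m i c with ⟨h0, hcv⟩ | ⟨h1, hcv⟩ <;>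
  · simp only [Matrix.submatrix_apply, Equiv.coe_addRight,
      Matrix.updateCol_apply, tilingMatrix, Matrix.of_apply, Pi.single_apply,
      Fin.ext_iff, hcv]
    clear hcv
    split_ifs <;> first | rfl | (exfalso; omega) | tauto

private lemma off_entry (p q : ℝ) (m : ℕ) (i r c : Fin (m + 2)) (hrc : (r : ℕ) < (c : ℕ)) :
    ((tilingMatrix p q (m + 2)).updateCol i (Pi.single i 1)).submatrix
      (Equiv.addRight (i + 1)) (Equiv.addRight (i + 1)) r c = 0 := by
  have hr := r.isLt; have hc := c.isLt; have hi := i.isLt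
  rcases valAdd' m i r with ⟨h0r, hrv⟩ | ⟨h1, hrv⟩ <;> rcases valAdd' m i c with hcv | ⟨h1', hcv⟩ <;>
  · simp only [Matrix.submatrix_apply, Equiv.coe_addRight,
      Matrix.updateCol_apply, tilingMatrix, Matrix.of_apply, Pi.single_apply,
      Fin.ext_iff, hrv, hcv]
    clear hrv hcv
    split_ifs <;> first | rfl | (exfalso; omega) | tauto

/-- Replacing the `i`-th column of `A` by the standard basis vector `e_i`
yields a matrix of determinant `q^(n-1)`. -/
theorem det_updateColumn (p q : ℝ) (hp : 0 < p) (hq : 0 < q) (n : ℕ) (hn : 2 ≤ n) (i : Fin n) :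
    ((tilingMatrix p q n).updateCol i (Pi.single i 1)).det = q ^ (n - 1) := by
  obtain ⟨m, rfl⟩ : ∃ m, n = m + 2 := ⟨n - 2, by omega⟩
  set B := (tilingMatrix p q (m + 2)).updateCol i (Pi.single i 1) with hB
  set f : Equiv.Perm (Fin (m + 2)) := Equiv.addRight (i + 1) with hf
  have hdet := Matrix.det_submatrix_equiv_self f B
  rw [← hdet, Matrix.det_of_lowerTriangular]
  · rw [Finset.prod_congr rfl (fun c _ => diag_entry p q m i c), Fin.prod_univ_castSucc]
    have h2 : ∀ c : Fin (m + 1),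
        (if ((Fin.castSucc c : Fin (m + 2)) : ℕ) = m + 1 then (1 : ℝ) else q) = q := by
      intro c; have := c.isLt; simp only [Fin.coe_castSucc]; rw [if_neg (by omega)]
    rw [Finset.prod_congr rfl (fun c _ => h2 c)]
    simp
  · intro r c hrc
    exact off_entry p q m i r c hrc
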